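/- Let {Π_i}_{i=0}^{d−1} be pairwise orthogonal rank-one projection matrices on ℂ^d with real entries satisfying Π_i Π_j = δ_{ij} Π_i and ∑_i Π_i = I. For a density matrix ρ on ℂ^d, set p_i = Tr(Π_i ρ Π_i) and, whenever p_i > 0, ρ_i = Π_i ρ Π_i / p_i. Then M_Re(∑_i Π_i ρ Π_i) = ∑_{i : p_i > 0} p_i · M_Re(ρ_i). -/

import Mathlib

open Matrix Complex ComplexOrder Classical

/-- The positive semidefinite square root of a matrix (junk value `0` if not PSD). -/
noncomputable def psqrt {n : Type*} [Fintype n] [DecidableEq n] (A : Matrix n n ℂ) :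
    Matrix n n ℂ :=
  if h : A.PosSemidef then (h.1.eigenvectorUnitary : Matrix n n ℂ) *
      diagonal ((↑) ∘ (√·) ∘ h.1.eigenvalues) * (star h.1.eigenvectorUnitary : Matrix n n ℂ)
    else 0

/-- Entrywise complex conjugate of a matrix. -/
def mconj {m n : Type*} (A : Matrix m n ℂ) : Matrix m n ℂ := A.map (starRingEnd ℂ)

/-- Fidelity `F(ρ,σ) = Tr √(√ρ σ √ρ)`. -/
noncomputable def fidelity {n : Type*} [Fintype n] [DecidableEq n] (ρ σ : Matrix n n ℂ) : ℝ :=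
  ((psqrt (psqrt ρ * σ * psqrt ρ)).trace).re

/-- The real part state `Re(ρ) = (ρ + ρ*)/2`. -/
noncomputable def reState {n : Type*} (ρ : Matrix n n ℂ) : Matrix n n ℂ :=
  ((1 : ℂ)/2) • (ρ + mconj ρ)

/-- The imaginarity measure `M_Re(ρ) = 1 - F(ρ, Re(ρ))`. -/
noncomputable def MRe {n : Type*} [Fintype n] [DecidableEq n] (ρ : Matrix n n ℂ) : ℝ :=
  1 - fidelity ρ (reState ρ)

/-- A density matrix: positive semidefinite with trace 1. -/
def IsDensityMatrix {n : Type*} [Fintype n] (ρ : Matrix n n ℂ) : Prop :=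
  ρ.PosSemidef ∧ ρ.trace = 1

/-! Because each `Π_i` is a real rank-one projection, `Π_i ρ Π_i = p_i Π_i`: every `ρ_i` equals
`Π_i`, and the dephased state `∑ p_i Π_i` is real. A real density matrix is its own real part
state and `F(σ, σ) = Tr σ = 1`, so both sides of the identity vanish. -/

open scoped MatrixOrder

lemma psqrt_eq_sqrt {n : Type*} [Fintype n] [DecidableEq n] {A : Matrix n n ℂ}
    (hA : A.PosSemidef) : psqrt A = CFC.sqrt A := by
  rw [CFC.sqrt_eq_real_sqrt A hA.nonneg, cfcₙ_eq_cfc, psqrt, dif_pos hA, hA.1.cfc_eq,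
    IsHermitian.cfc, Unitary.conjStarAlgAut_apply]
  rfl

lemma fidelity_self {n : Type*} [Fintype n] [DecidableEq n] {ρ : Matrix n n ℂ}
    (hρ : ρ.PosSemidef) : fidelity ρ ρ = ρ.trace.re := by
  have hsq : (ρ * ρ).PosSemidef := by
    simpa [hρ.1.eq] using posSemidef_conjTranspose_mul_self ρ
  have hmid : CFC.sqrt ρ * ρ * CFC.sqrt ρ = ρ * ρ := by
    nth_rw 2 [← CFC.sqrt_mul_sqrt_self ρ hρ.nonneg]
    conv_rhs => rw [← CFC.sqrt_mul_sqrt_self ρ hρ.nonneg]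
    simp only [mul_assoc]
  rw [fidelity, psqrt_eq_sqrt hρ, hmid, psqrt_eq_sqrt hsq, CFC.sqrt_mul_self ρ hρ.nonneg]

lemma reState_eq_self_of_mconj_eq {n : Type*} {ρ : Matrix n n ℂ} (h : mconj ρ = ρ) :
    reState ρ = ρ := by
  rw [reState, h, ← two_smul ℂ ρ, smul_smul]
  norm_num

lemma MRe_eq_zero_of_mconj_eq {n : Type*} [Fintype n] [DecidableEq n] {ρ : Matrix n n ℂ}
    (hρ : IsDensityMatrix ρ) (h : mconj ρ = ρ) : MRe ρ = 0 := by
  rw [MRe, reState_eq_self_of_mconj_eq h, fidelity_self hρ.1, hρ.2, Complex.one_re, sub_self]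

namespace Matrix

variable {m n K : Type*} [Fintype n] [Field K]

theorem exists_eq_vecMulVec_of_rank_le_one {P : Matrix m n K} (hP : P.rank ≤ 1) :
    ∃ u w, P = vecMulVec u w := by
  classical
  obtain ⟨⟨u, _⟩, hspan⟩ := finrank_le_one_iff.mp hP
  choose w hw using fun l =>
    hspan ⟨P.col l, P.mulVec_single_one l ▸ LinearMap.mem_range_self _ _⟩
  refine ⟨u, w, ext fun k l => ?_⟩
  have := congrFun (congrArg Subtype.val (hw l)) k
  simp only [SetLike.val_smul, Pi.smul_apply, smul_eq_mul, col_apply] at this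
  rw [vecMulVec_apply, ← this, mul_comm]

theorem mul_mul_eq_trace_mul_smul_of_rank_le_one {P : Matrix n n K} (hP : P.rank ≤ 1)
    (A : Matrix n n K) : P * A * P = (P * A).trace • P := by
  obtain ⟨u, w, rfl⟩ := exists_eq_vecMulVec_of_rank_le_one hP
  rw [vecMulVec_mul, vecMulVec_mul_vecMulVec, vecMulVec_smul, trace_vecMulVec, dotProduct_comm]

theorem trace_eq_one_of_isIdempotentElem_of_rank_eq_one [DecidableEq n] {P : Matrix n n K}
    (hP : IsIdempotentElem P) (hr : P.rank = 1) : P.trace = 1 := by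
  have hne : P ≠ 0 := by rintro rfl; simp at hr
  refine smul_left_injective K hne ?_
  simpa [hP.eq] using (mul_mul_eq_trace_mul_smul_of_rank_le_one hr.le 1).symm

theorem mul_mul_eq_trace_smul_of_isIdempotentElem_of_rank_eq_one {P : Matrix n n K}
    (hP : IsIdempotentElem P) (hr : P.rank = 1) (A : Matrix n n K) :
    P * A * P = (P * A * P).trace • P := by
  rw [trace_mul_cycle, hP.eq]
  exact mul_mul_eq_trace_mul_smul_of_rank_le_one hr.le A

end Matrix

lemma mconj_eq_self_iff {m n : Type*} {A : Matrix m n ℂ} :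
    mconj A = A ↔ ∀ k l, (A k l).im = 0 := by
  simp only [mconj, ← Matrix.ext_iff, map_apply, Complex.conj_eq_iff_im]

section Projections

variable {ι n : Type*} [Fintype n] {P ρ : Matrix n n ℂ}

lemma Matrix.PosSemidef.mul_mul_of_isStarProjection (hρ : ρ.PosSemidef)
    (hP : IsStarProjection P) : (P * ρ * P).PosSemidef := by
  simpa only [← star_eq_conjTranspose, hP.isSelfAdjoint.star_eq] using
    hρ.mul_mul_conjTranspose_same P

lemma isDensityMatrix_of_isStarProjection_of_rank_eq_one [DecidableEq n]
    (hP : IsStarProjection P) (hr : P.rank = 1) : IsDensityMatrix P :=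
  ⟨hP.nonneg.posSemidef, trace_eq_one_of_isIdempotentElem_of_rank_eq_one hP.isIdempotentElem hr⟩

lemma mul_mul_eq_re_trace_smul (hP : IsStarProjection P) (hr : P.rank = 1)
    (hρ : ρ.PosSemidef) : P * ρ * P = ((P * ρ * P).trace.re : ℂ) • P := by
  have htrace : (0 : ℂ) ≤ (P * ρ * P).trace := (hρ.mul_mul_of_isStarProjection hP).trace_nonneg
  rw [← Complex.eq_re_of_ofReal_le (Complex.ofReal_zero ▸ htrace)]
  exact mul_mul_eq_trace_smul_of_isIdempotentElem_of_rank_eq_one hP.isIdempotentElem hr ρ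

lemma IsDensityMatrix.sum_mul_mul [DecidableEq n] [Fintype ι] {P : ι → Matrix n n ℂ}
    (hP : ∀ i, IsStarProjection (P i)) (hsum : ∑ i, P i = 1) (hρ : IsDensityMatrix ρ) :
    IsDensityMatrix (∑ i, P i * ρ * P i) := by
  refine ⟨posSemidef_sum _ fun i _ => hρ.1.mul_mul_of_isStarProjection (hP i), ?_⟩
  calc (∑ i, P i * ρ * P i).trace = ∑ i, (P i * P i * ρ).trace := by
        simp only [trace_sum, trace_mul_cycle _ ρ]
    _ = ρ.trace := by
        simp only [fun i => (hP i).isIdempotentElem.eq, ← trace_sum, ← Finset.sum_mul, hsum,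
          one_mul]
    _ = 1 := hρ.2

end Projections

theorem stmt4 (d : ℕ) (P : Fin d → Matrix (Fin d) (Fin d) ℂ)
    (hreal : ∀ i k l, ((P i) k l).im = 0)
    (hherm : ∀ i, (P i).IsHermitian)
    (hrank : ∀ i, (P i).rank = 1)
    (horth : ∀ i j, P i * P j = if i = j then P i else 0)
    (hsum : ∑ i, P i = 1)
    (ρ : Matrix (Fin d) (Fin d) ℂ) (hρ : IsDensityMatrix ρ) :
    MRe (∑ i, P i * ρ * P i) =
      ∑ i ∈ Finset.univ.filter (fun i => 0 < ((P i * ρ * P i).trace).re),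
        ((P i * ρ * P i).trace).re *
          MRe (((((P i * ρ * P i).trace).re : ℂ))⁻¹ • (P i * ρ * P i)) := by
  have hP : ∀ i, IsStarProjection (P i) := fun i =>
    ⟨show P i * P i = P i by simpa using horth i i, hherm i⟩
  have hdeph := fun i => mul_mul_eq_re_trace_smul (hP i) (hrank i) hρ.1
  have hdeph_real : mconj (∑ i, P i * ρ * P i) = ∑ i, P i * ρ * P i := by
    refine mconj_eq_self_iff.2 fun k l => ?_
    rw [Finset.sum_congr rfl fun i _ => hdeph i]
    simp [Matrix.sum_apply, hreal]
  rw [MRe_eq_zero_of_mconj_eq (hρ.sum_mul_mul hP hsum) hdeph_real]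
  refine (Finset.sum_eq_zero fun i hi => ?_).symm
  have hρi : ((P i * ρ * P i).trace.re : ℂ)⁻¹ • (P i * ρ * P i) = P i := by
    nth_rw 2 [hdeph i]
    rw [smul_smul, inv_mul_cancel₀ (by exact_mod_cast (Finset.mem_filter.1 hi).2.ne'), one_smul]
  rw [hρi, MRe_eq_zero_of_mconj_eq (isDensityMatrix_of_isStarProjection_of_rank_eq_one (hP i)
    (hrank i)) (mconj_eq_self_iff.2 (hreal i)), mul_zero]
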